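/- arXiv:1206.4025 — 2 statements merged into one kernel-verified Lean document; each statement's English description precedes it below -/
import Mathlib

section
/- For any integer d ≥ 1 and real t > 0, the d×d matrix L(t) with entries L(t)_{i,j} = λ([i-1,i) ∩ [(j-1)t², jt²)) and the vector z with z_i = Z_d^{-1/2} i^{-1/2} satisfy ⟨z, L(t) z⟩ = Z_d^{-1} ∫_0^{d·min(1,t²)} (⌈r/t²⌉ ⌈r⌉)^{-1/2} dr. -/
open MeasureTheory

noncomputable def Lmat (d : ℕ) (t : ℝ) : Matrix (Fin d) (Fin d) ℝ :=
  fun i j => (volume (Set.Ico (i : ℝ) ((i : ℝ) + 1) ∩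
    Set.Ico ((j : ℝ) * t ^ 2) (((j : ℝ) + 1) * t ^ 2))).toReal

noncomputable def Zd (d : ℕ) : ℝ := ∑ i ∈ Finset.range d, ((i : ℝ) + 1)⁻¹

noncomputable def zvec (d : ℕ) (i : Fin d) : ℝ :=
  (Real.sqrt (Zd d))⁻¹ * (Real.sqrt ((i : ℝ) + 1))⁻¹

/-!
With `T = t²`, the cells `(i, i + 1] ∩ (jT, (j + 1)T]`, `i, j < d`, partition
`(0, d · min 1 T]` and agree with the cells of `Lmat` up to endpoints. On the `(i, j)` cell
`⌈r⌉ = i + 1` and `⌈r / T⌉ = j + 1`, so the integrand is the constant `((i + 1)(j + 1))^{-1/2}`,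
which is `Z_d · z_i z_j`. Hence the integral is `Z_d ∑ L(t)_{ij} z_i z_j`.
-/

open Set Function

theorem setIntegral_biUnion_eq_sum_of_eqOn {X ι : Type*} [MeasurableSpace X] {μ : Measure X}
    {f : X → ℝ} (t : Finset ι) {s : ι → Set X} (c : ι → ℝ)
    (hs : ∀ i ∈ t, MeasurableSet (s i)) (hdisj : (t : Set ι).Pairwise (Disjoint on s))
    (hfin : ∀ i ∈ t, μ (s i) ≠ ⊤) (hf : ∀ i ∈ t, EqOn f (fun _ => c i) (s i)) :
    ∫ x in ⋃ i ∈ t, s i, f x ∂μ = ∑ i ∈ t, μ.real (s i) * c i := by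
  have hint : ∀ i ∈ t, IntegrableOn f (s i) μ := fun i hi =>
    (integrableOn_const (hfin i hi)).congr_fun (hf i hi).symm (hs i hi)
  rw [integral_biUnion_finset t hs hdisj hint]
  refine Finset.sum_congr rfl fun i hi => ?_
  rw [setIntegral_congr_fun (hs i hi) (hf i hi), setIntegral_const, smul_eq_mul]

theorem biUnion_product_inter {α ι κ : Type*} (s : Finset ι) (t : Finset κ) (A : ι → Set α)
    (B : κ → Set α) : ⋃ p ∈ s ×ˢ t, A p.1 ∩ B p.2 = (⋃ i ∈ s, A i) ∩ ⋃ j ∈ t, B j := by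
  ext x
  simp only [mem_iUnion, mem_inter_iff, Finset.mem_product, exists_prop, Prod.exists]
  tauto

theorem Pairwise.disjoint_inter_prod {α ι κ : Type*} {A : ι → Set α} {B : κ → Set α}
    (hA : Pairwise (Disjoint on A)) (hB : Pairwise (Disjoint on B)) :
    Pairwise (Disjoint on fun p : ι × κ => A p.1 ∩ B p.2) := by
  rintro ⟨i, j⟩ ⟨i', j'⟩ hne
  by_cases hi : i = i'
  · subst hi
    have hj : j ≠ j' := fun h => hne (h ▸ rfl)
    exact (hB hj).mono inter_subset_right inter_subset_right
  · exact (hA hi).mono inter_subset_left inter_subset_left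

theorem biUnion_range_Ioc_mul (d : ℕ) {a : ℝ} (ha : 0 ≤ a) :
    ⋃ i ∈ Finset.range d, Ioc ((i : ℝ) * a) ((i + 1) * a) = Ioc 0 (d * a) := by
  simpa [Order.succ_eq_add_one] using (Nat.mono_cast.mul_const ha).biUnion_Ico_Ioc_map_succ 0 d

theorem pairwise_disjoint_Ioc_mul {a : ℝ} (ha : 0 ≤ a) :
    Pairwise (Disjoint on fun i : ℕ => Ioc ((i : ℝ) * a) ((i + 1) * a)) := by
  simpa [Order.succ_eq_add_one] using (Nat.mono_cast.mul_const ha).pairwise_disjoint_on_Ioc_succ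

/-- Left-open, unlike the cells measured by `Lmat`, so that both ceilings in the integrand are
constant on it. -/
def gridCell (T : ℝ) (i j : ℕ) : Set ℝ := Ioc (i : ℝ) (i + 1) ∩ Ioc (j * T) ((j + 1) * T)

theorem Lmat_eq_measureReal_gridCell (d : ℕ) (t : ℝ) (i j : Fin d) :
    Lmat d t i j = volume.real (gridCell (t ^ 2) i j) :=
  measureReal_congr (Ico_ae_eq_Ioc.inter Ico_ae_eq_Ioc)

theorem ceil_div_eq_of_mem_Ioc_mul {r T : ℝ} (hT : 0 < T) {j : ℕ}
    (hr : r ∈ Ioc (j * T) ((j + 1) * T)) : ⌈r / T⌉ = j + 1 := by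
  rw [Int.ceil_eq_iff]
  push_cast
  constructor
  · rw [add_sub_cancel_right, lt_div_iff₀ hT]; exact hr.1
  · rw [div_le_iff₀ hT]; exact hr.2

theorem integrand_eqOn_gridCell {T : ℝ} (hT : 0 < T) (i j : ℕ) :
    EqOn (fun r => (√((⌈r / T⌉ : ℝ) * (⌈r⌉ : ℝ)))⁻¹) (fun _ => (√((j + 1) * (i + 1) : ℝ))⁻¹)
      (gridCell T i j) := by
  intro r hr
  have hi : ⌈r⌉ = i + 1 := by simpa using ceil_div_eq_of_mem_Ioc_mul one_pos (by simpa using hr.1)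
  simp only [ceil_div_eq_of_mem_Ioc_mul hT hr.2, hi]
  push_cast
  rfl

theorem biUnion_gridCell (d : ℕ) {T : ℝ} (hT : 0 ≤ T) :
    ⋃ p ∈ Finset.range d ×ˢ Finset.range d, gridCell T p.1 p.2 = Ioc 0 (d * min 1 T) := by
  have h1 := biUnion_range_Ioc_mul d zero_le_one
  simp only [mul_one] at h1
  refine (biUnion_product_inter _ _ (fun i : ℕ => Ioc (i : ℝ) (i + 1))
    (fun j : ℕ => Ioc (j * T) ((j + 1) * T))).trans ?_
  rw [h1, biUnion_range_Ioc_mul d hT, Ioc_inter_Ioc, max_self,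
    mul_min_of_nonneg _ _ d.cast_nonneg, mul_one]

theorem pairwise_disjoint_gridCell {T : ℝ} (hT : 0 ≤ T) :
    Pairwise (Disjoint on fun p : ℕ × ℕ => gridCell T p.1 p.2) := by
  have h1 := pairwise_disjoint_Ioc_mul zero_le_one
  simp only [mul_one] at h1
  exact h1.disjoint_inter_prod (pairwise_disjoint_Ioc_mul hT)

theorem intervalIntegral_eq_sum_gridCell (d : ℕ) {T : ℝ} (hT : 0 < T) :
    ∫ r in (0 : ℝ)..d * min 1 T, (√((⌈r / T⌉ : ℝ) * (⌈r⌉ : ℝ)))⁻¹ =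
      ∑ i ∈ Finset.range d, ∑ j ∈ Finset.range d,
        volume.real (gridCell T i j) * (√((j + 1) * (i + 1) : ℝ))⁻¹ := by
  rw [intervalIntegral.integral_of_le (by positivity), ← biUnion_gridCell d hT.le,
    setIntegral_biUnion_eq_sum_of_eqOn (s := fun p : ℕ × ℕ => gridCell T p.1 p.2) _ _
      (fun _ _ => measurableSet_Ioc.inter measurableSet_Ioc)
      ((pairwise_disjoint_gridCell hT.le).set_pairwise _)
      (fun _ _ => ((measure_mono inter_subset_left).trans_lt measure_Ioc_lt_top).ne)
      (fun p _ => integrand_eqOn_gridCell hT p.1 p.2),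
    Finset.sum_product]

theorem Zd_nonneg (d : ℕ) : 0 ≤ Zd d :=
  Finset.sum_nonneg fun _ _ => by positivity

theorem zvec_mul_zvec (d : ℕ) (i j : Fin d) :
    zvec d i * zvec d j = (Zd d)⁻¹ * (√((j + 1) * (i + 1) : ℝ))⁻¹ := by
  have hZ : (Zd d)⁻¹ = (√(Zd d))⁻¹ * (√(Zd d))⁻¹ := by
    rw [← mul_inv, Real.mul_self_sqrt (Zd_nonneg d)]
  rw [zvec, zvec, Real.sqrt_mul (by positivity), hZ, mul_inv]
  ring

theorem lmat_bilinear_eq_integral_general (d : ℕ) (t : ℝ) (ht : 0 < t) :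
    ∑ i, ∑ j, Lmat d t i j * zvec d i * zvec d j =
      (Zd d)⁻¹ * ∫ r in (0:ℝ)..((d : ℝ) * min 1 (t ^ 2)),
        (Real.sqrt ((⌈r / t ^ 2⌉ : ℝ) * (⌈r⌉ : ℝ)))⁻¹ := by
  rw [intervalIntegral_eq_sum_gridCell d (by positivity), Finset.mul_sum]
  simp_rw [mul_assoc, zvec_mul_zvec, Lmat_eq_measureReal_gridCell, Finset.mul_sum,
    Finset.sum_range, mul_left_comm (Zd d)⁻¹]

theorem lmat_bilinear_eq_integral (d : ℕ) (hd : 1 ≤ d) (t : ℝ) (ht : 0 < t) :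
    ∑ i, ∑ j, Lmat d t i j * zvec d i * zvec d j =
      (Zd d)⁻¹ * ∫ r in (0:ℝ)..((d : ℝ) * min 1 (t ^ 2)),
        (Real.sqrt ((⌈r / t ^ 2⌉ : ℝ) * (⌈r⌉ : ℝ)))⁻¹ :=
  lmat_bilinear_eq_integral_general d t ht
end

section
/- Let d ≥ 1 and t > 0. Define d² matrices L^r(t) ∈ M_d (r indexed by pairs (i,j) via r = i + (j-1)d) where L^{i+(j-1)d}(t) has (i,j)-entry equal to (L(t)_{i,j})^{1/2} and all other entries zero, with L(t)_{i,j} = λ([i-1,i)∩[(j-1)t², jt²)). Then ∑_r L^r(t) L^r(t)* ≤ Id and ∑_r L^r(t)* L^r(t) ≤ t² · Id in the Loewner (positive semidefinite) order. -/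
open MeasureTheory Matrix ComplexOrder

/-- The family `L^r(t)` of `d²` matrices, indexed by pairs `(i,j)`: the matrix
`Lr d t (i,j)` has `(i,j)`-entry `√(L(t)_{i,j})` and all other entries zero. -/
noncomputable def Lr (d : ℕ) (t : ℝ) (p : Fin d × Fin d) : Matrix (Fin d) (Fin d) ℂ :=
  Matrix.single p.1 p.2 ((Real.sqrt (Lmat d t p.1 p.2) : ℝ) : ℂ)

/-! `L^r(t) L^r(t)*` and `L^r(t)* L^r(t)` are multiples of diagonal matrix units, so both sums
are diagonal, with entries the row sums `∑ⱼ L(t)ᵢⱼ` and the column sums `∑ᵢ L(t)ᵢⱼ`. A row sum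
measures the part of `[i-1, i)` covered by the disjoint intervals `[(j-1)t², jt²)`, hence is at
most `1`; symmetrically a column sum is at most `t²`. -/

open Function
open scoped ENNReal

theorem pairwise_disjoint_Ico_natCast_mul {α : Type*} [Semiring α] [PartialOrder α]
    [IsOrderedRing α] {c : α} (hc : 0 ≤ c) :
    Pairwise (Disjoint on fun n : ℕ => Set.Ico (n * c) ((n + 1) * c)) := by
  have hmono : Monotone fun n : ℕ => (n : α) * c :=
    fun _ _ h => mul_le_mul_of_nonneg_right (Nat.mono_cast h) hc
  simpa using hmono.pairwise_disjoint_on_Ico_succ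

theorem sum_measureReal_inter_le {α ι : Type*} [MeasurableSpace α] {μ : Measure α} [Fintype ι]
    {A : Set α} {B : ι → Set α} (hA : MeasurableSet A) (hAμ : μ A ≠ ∞)
    (hB : ∀ i, MeasurableSet (B i)) (hBd : Pairwise (Disjoint on B)) :
    ∑ i, μ.real (A ∩ B i) ≤ μ.real A := by
  have hfin : ∀ i ∈ Finset.univ, μ (A ∩ B i) ≠ ∞ :=
    fun i _ => measure_ne_top_of_subset Set.inter_subset_left hAμ
  rw [← measureReal_biUnion_finset
    (fun i _ j _ hij => (hBd hij).mono Set.inter_subset_right Set.inter_subset_right)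
    (fun i _ => hA.inter (hB i)) hfin]
  exact measureReal_mono (by simp) hAμ

theorem sum_Lmat_row_le_one (d : ℕ) (t : ℝ) (i : Fin d) : ∑ j, Lmat d t i j ≤ 1 := by
  have hdisj := (pairwise_disjoint_Ico_natCast_mul (sq_nonneg t)).comp_of_injective
    (Fin.val_injective (n := d))
  simpa [Lmat, ← measureReal_def] using
    sum_measureReal_inter_le (μ := volume) (A := Set.Ico (i : ℝ) (i + 1)) measurableSet_Ico
      (by simp) (fun _ => measurableSet_Ico) hdisj

theorem sum_Lmat_col_le_sq (d : ℕ) (t : ℝ) (j : Fin d) : ∑ i, Lmat d t i j ≤ t ^ 2 := by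
  have hdisj := (pairwise_disjoint_Ico_natCast_mul (zero_le_one' ℝ)).comp_of_injective
    (Fin.val_injective (n := d))
  have h := sum_measureReal_inter_le (μ := volume)
    (A := Set.Ico ((j : ℝ) * t ^ 2) ((j + 1) * t ^ 2)) measurableSet_Ico (by simp)
    (fun _ => measurableSet_Ico) hdisj
  rw [Real.volume_real_Ico, show ((j : ℝ) + 1) * t ^ 2 - j * t ^ 2 = t ^ 2 by ring,
    max_eq_left (sq_nonneg t)] at h
  simpa [Lmat, ← measureReal_def, Set.inter_comm] using h

theorem sum_sum_single_eq_diagonal {m n α : Type*} [DecidableEq m] [Fintype m] [Fintype n]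
    [AddCommMonoid α] (f : m → n → α) :
    ∑ i, ∑ j, single i i (f i j) = diagonal fun i => ∑ j, f i j := by
  rw [← sum_single_eq_diagonal]
  exact Finset.sum_congr rfl fun i _ => (map_sum (singleAddMonoidHom (α := α) i i) _ _).symm

theorem single_mul_conjTranspose_single {m n α : Type*} [DecidableEq m] [DecidableEq n]
    [Fintype n] [NonUnitalNonAssocSemiring α] [StarAddMonoid α] (i : m) (j : n) (a : α) :
    single i j a * (single i j a)ᴴ = single i i (a * star a) := by
  rw [conjTranspose_single, single_mul_single_same]

theorem conjTranspose_single_mul_single {m n α : Type*} [DecidableEq m] [DecidableEq n]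
    [Fintype m] [NonUnitalNonAssocSemiring α] [StarAddMonoid α] (i : m) (j : n) (a : α) :
    (single i j a)ᴴ * single i j a = single j j (star a * a) := by
  rw [conjTranspose_single, single_mul_single_same]

theorem posSemidef_smul_one_sub_diagonal {n 𝕜 : Type*} [Fintype n] [DecidableEq n] [RCLike 𝕜]
    {c : ℝ} {r : n → ℝ} (h : ∀ i, r i ≤ c) :
    ((c : 𝕜) • (1 : Matrix n n 𝕜) - diagonal fun i => (r i : 𝕜)).PosSemidef := by
  rw [smul_one_eq_diagonal, diagonal_sub, posSemidef_diagonal_iff]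
  intro i
  rw [← RCLike.ofReal_sub, RCLike.ofReal_nonneg, sub_nonneg]
  exact h i

theorem ofReal_sqrt_mul_star {x : ℝ} (hx : 0 ≤ x) :
    (Real.sqrt x : ℂ) * star (Real.sqrt x : ℂ) = x := by
  rw [Complex.star_def, Complex.conj_ofReal, ← Complex.ofReal_mul, Real.mul_self_sqrt hx]

theorem Lmat_nonneg (d : ℕ) (t : ℝ) (i j : Fin d) : 0 ≤ Lmat d t i j := ENNReal.toReal_nonneg

theorem sum_Lr_mul_conjTranspose (d : ℕ) (t : ℝ) :
    ∑ p, Lr d t p * (Lr d t p)ᴴ = diagonal fun i => ((∑ j, Lmat d t i j : ℝ) : ℂ) := by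
  simp_rw [Fintype.sum_prod_type, Lr, single_mul_conjTranspose_single,
    ofReal_sqrt_mul_star (Lmat_nonneg _ _ _ _), sum_sum_single_eq_diagonal, Complex.ofReal_sum]

theorem sum_conjTranspose_Lr_mul (d : ℕ) (t : ℝ) :
    ∑ p, (Lr d t p)ᴴ * Lr d t p = diagonal fun j => ((∑ i, Lmat d t i j : ℝ) : ℂ) := by
  simp_rw [Fintype.sum_prod_type_right, Lr, conjTranspose_single_mul_single, mul_comm (star _),
    ofReal_sqrt_mul_star (Lmat_nonneg _ _ _ _), sum_sum_single_eq_diagonal, Complex.ofReal_sum]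

theorem Lr_sums_loewner_bounds_general (d : ℕ) (t : ℝ) :
    ((1 : Matrix (Fin d) (Fin d) ℂ) - ∑ p : Fin d × Fin d, Lr d t p * (Lr d t p)ᴴ).PosSemidef ∧
    (((t : ℂ) ^ 2 • (1 : Matrix (Fin d) (Fin d) ℂ)) -
        ∑ p : Fin d × Fin d, (Lr d t p)ᴴ * Lr d t p).PosSemidef := by
  rw [sum_Lr_mul_conjTranspose, sum_conjTranspose_Lr_mul]
  constructor
  · simpa using posSemidef_smul_one_sub_diagonal (𝕜 := ℂ) (sum_Lmat_row_le_one d t)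
  · simpa using posSemidef_smul_one_sub_diagonal (𝕜 := ℂ) (sum_Lmat_col_le_sq d t)

theorem Lr_sums_loewner_bounds (d : ℕ) (hd : 1 ≤ d) (t : ℝ) (ht : 0 < t) :
    ((1 : Matrix (Fin d) (Fin d) ℂ) - ∑ p : Fin d × Fin d, Lr d t p * (Lr d t p)ᴴ).PosSemidef ∧
    (((t : ℂ) ^ 2 • (1 : Matrix (Fin d) (Fin d) ℂ)) -
        ∑ p : Fin d × Fin d, (Lr d t p)ᴴ * Lr d t p).PosSemidef :=
  Lr_sums_loewner_bounds_general d t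
end
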